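/- For every integer k ≥ 0 and every α ∈ [0,1]: h(Bin(k,α)) ≤ h(Bin(k+1)). -/

import Mathlib

/-- The probabilities of the altered binomial distribution `Bin(k,α)` on `{0,…,k+1}`:
`p_α(i) = (1−α)·C(k,i)·2^{−k} + α·C(k,i−1)·2^{−k}`, with `C(k,−1) = C(k,k+1) = 0`. -/
noncomputable def binAltP (k : ℕ) (α : ℝ) (i : ℕ) : ℝ :=
  (1 - α) * (k.choose i : ℝ) / 2^k +
    α * (if 1 ≤ i then (k.choose (i-1) : ℝ) / 2^k else 0)

/-- The entropy of the altered binomial distribution `Bin(k,α)`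
(convention `0·log₂ 0 = 0`, automatic for `Real.logb`). -/
noncomputable def binAltEnt (k : ℕ) (α : ℝ) : ℝ :=
  -∑ i ∈ Finset.range (k+2), binAltP k α i * Real.logb 2 (binAltP k α i)

/-- The entropy of the binomial distribution `Bin(k)` on `{0,…,k}` with probabilities
`C(k,i)/2^k`. -/
noncomputable def binEnt (k : ℕ) : ℝ :=
  -∑ i ∈ Finset.range (k+1),
    ((k.choose i : ℝ) / 2^k) * Real.logb 2 ((k.choose i : ℝ) / 2^k)

/-! Entropy is concave and `Bin(k,α)` depends affinely on `α`, so `α ↦ h(Bin(k,α))` is concave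
on `[0,1]`. Reflecting `i ↦ k+1-i` carries `Bin(k,1-α)` to `Bin(k,α)`, so this function is
symmetric about `1/2` and hence maximal there; and by Pascal's rule `Bin(k,1/2) = Bin(k+1)`. -/

open Finset Real

lemma Nat.choose_succ_sub {k i : ℕ} (hi : i ≤ k + 1) :
    k.choose (k + 1 - i) = if 1 ≤ i then k.choose (i - 1) else 0 := by
  rcases i with _ | j
  · simp
  · rw [if_pos (Nat.le_add_left 1 j), Nat.add_sub_add_right, Nat.add_sub_cancel,
      Nat.choose_symm (by omega)]

lemma binAltP_eq (k : ℕ) (α : ℝ) (i : ℕ) :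
    binAltP k α i =
      ((1 - α) * k.choose i + α * ((if 1 ≤ i then k.choose (i - 1) else 0 : ℕ) : ℝ)) / 2 ^ k := by
  unfold binAltP
  split_ifs <;> push_cast <;> ring

lemma binAltP_nonneg {k : ℕ} {α : ℝ} (hα : α ∈ Set.Icc (0 : ℝ) 1) (i : ℕ) :
    0 ≤ binAltP k α i := by
  obtain ⟨hα0, hα1⟩ := hα
  have : 0 ≤ 1 - α := sub_nonneg.2 hα1
  rw [binAltP_eq]
  positivity

lemma binAltP_combo (k : ℕ) {a b : ℝ} (hab : a + b = 1) (x y : ℝ) (i : ℕ) :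
    binAltP k (a * x + b * y) i = a * binAltP k x i + b * binAltP k y i := by
  simp only [binAltP_eq]
  linear_combination (-(k.choose i : ℝ) / 2 ^ k) * hab

lemma binAltP_one_sub_reflect {k i : ℕ} (hi : i ≤ k + 1) (α : ℝ) :
    binAltP k (1 - α) (k + 1 - i) = binAltP k α i := by
  have hi' : k + 1 - (k + 1 - i) = i := by omega
  have := Nat.choose_succ_sub (k := k) (i := k + 1 - i) (by omega)
  rw [hi'] at this
  rw [binAltP_eq, binAltP_eq, ← this, Nat.choose_succ_sub hi]
  ring

lemma binAltP_half (k i : ℕ) : binAltP k (1 / 2) i = ((k + 1).choose i : ℝ) / 2 ^ (k + 1) := by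
  have pascal : (k + 1).choose i = k.choose i + if 1 ≤ i then k.choose (i - 1) else 0 := by
    rcases i with _ | j
    · simp
    · rw [if_pos (Nat.le_add_left 1 j), Nat.add_sub_cancel, Nat.choose_succ_succ', add_comm]
  rw [binAltP_eq, pascal, pow_succ]
  push_cast
  ring

lemma binAltEnt_one_sub (k : ℕ) (α : ℝ) : binAltEnt k (1 - α) = binAltEnt k α := by
  unfold binAltEnt
  rw [← sum_range_reflect]
  congr 1
  refine sum_congr rfl fun i hi => ?_
  rw [show k + 2 - 1 - i = k + 1 - i by omega,
    binAltP_one_sub_reflect (Nat.le_of_lt_succ (mem_range.1 hi))]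

lemma binAltEnt_half (k : ℕ) : binAltEnt k (1 / 2) = binEnt (k + 1) := by
  simp only [binAltEnt, binEnt, binAltP_half]

lemma binAltEnt_eq_sum_negMulLog (k : ℕ) :
    binAltEnt k = fun α => (log 2)⁻¹ * ∑ i ∈ range (k + 2), negMulLog (binAltP k α i) := by
  ext α
  simp only [binAltEnt, negMulLog, logb, mul_sum, ← sum_neg_distrib]
  exact sum_congr rfl fun i _ => by ring

lemma concaveOn_binAltEnt (k : ℕ) : ConcaveOn ℝ (Set.Icc 0 1) (binAltEnt k) := by
  rw [binAltEnt_eq_sum_negMulLog]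
  refine ConcaveOn.smul (by positivity) ⟨convex_Icc 0 1, fun x hx y hy a b ha hb hab => ?_⟩
  simp only [smul_eq_mul, mul_sum, ← sum_add_distrib, binAltP_combo k hab]
  exact sum_le_sum fun i _ =>
    concaveOn_negMulLog.2 (binAltP_nonneg hx i) (binAltP_nonneg hy i) ha hb hab

/-- For every `k ≥ 0` and `α ∈ [0,1]`: `h(Bin(k,α)) ≤ h(Bin(k+1))`. -/
theorem stmt_7 (k : ℕ) (α : ℝ) (hα0 : 0 ≤ α) (hα1 : α ≤ 1) :
    binAltEnt k α ≤ binEnt (k+1) := by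
  calc binAltEnt k α = (1 / 2) * binAltEnt k α + (1 / 2) * binAltEnt k (1 - α) := by
        rw [binAltEnt_one_sub]; ring
    _ ≤ binAltEnt k ((1 / 2) * α + (1 / 2) * (1 - α)) :=
        (concaveOn_binAltEnt k).2 ⟨hα0, hα1⟩ ⟨by linarith, by linarith⟩ (by norm_num) (by norm_num)
          (by norm_num)
    _ = binEnt (k + 1) := by
        rw [show (1 / 2) * α + (1 / 2) * (1 - α) = 1 / 2 by ring, binAltEnt_half]
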